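/- Let 𝒢 be a regular family containing all singletons and X_𝒢 the associated Schreier space. Then for any ε > 0 with ε < 1 being arbitrary, for every ordinal η and any F ∈ 𝒢^η (the η-th Cantor–Bendixson derivative of 𝒢), the functional Σ_{i∈F} eᵢ* lies in the η-th ε-Szlenk derivative s_ε^η(B_{X_𝒢*}). Consequently Sz(X_𝒢) ≥ CB(𝒢). -/

import Mathlib

/-
The map `F ↦ Σ_{i∈F} eᵢ*` sends `𝒢` into the dual unit ball, is weak*-continuous on `𝒢`
(the functionals are uniformly bounded and converge on the finitely supported vectors), and
is `1`-separated, because `Σ_{i∈F} eᵢ* − Σ_{i∈F'} eᵢ*` takes the value `±1` at `eᵢ` for any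
`i ∈ F △ F'`. A continuous, `ε`-separated map carries a Cantor–Bendixson limit point to a point
whose every weak*-neighbourhood contains two images at distance `> ε`, so by transfinite induction
it maps the `η`-th Cantor–Bendixson derivative into the `η`-th `ε`-Szlenk derivative.
-/

open Ordinal

variable {X : Type*} [NormedAddCommGroup X] [NormedSpace ℝ X]

/-- The dual norm of a weak-star functional. -/
noncomputable def dualNorm (f : WeakDual ℝ X) : ℝ := ‖WeakDual.toStrongDual f‖

/-- The `ε`-Szlenk derivative of a weak*-compact set `K ⊆ X*`: the points of `K` all of
whose weak*-neighborhoods meet `K` in a set of diameter `> ε`. -/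
def szDeriv (ε : ℝ) (K : Set (WeakDual ℝ X)) : Set (WeakDual ℝ X) :=
  {f | f ∈ K ∧ ∀ v ∈ nhds f, ∃ g ∈ v ∩ K, ∃ h ∈ v ∩ K, ε < dualNorm (g - h)}

/-- Transfinite iterates of the `ε`-Szlenk derivative. -/
noncomputable def szIter (ε : ℝ) (K : Set (WeakDual ℝ X)) (ξ : Ordinal) :
    Set (WeakDual ℝ X) :=
  Ordinal.limitRecOn ξ K (fun _ S => szDeriv ε S)
    (fun o _ ih => ⋂ (ζ : Ordinal) (h : ζ < o), ih ζ h)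

/-- Identify a finite subset of `ℕ` with a point of the Cantor space `ℕ → Bool`. -/
def toCantor (F : Finset ℕ) : ℕ → Bool := fun n => decide (n ∈ F)

/-- Hereditary: closed under subsets. -/
def Hereditary (G : Set (Finset ℕ)) : Prop := ∀ ⦃E F : Finset ℕ⦄, E ⊆ F → F ∈ G → E ∈ G

/-- Spreading: closed under replacing elements by larger ones, keeping the
increasing order and the cardinality. -/
def Spreading (G : Set (Finset ℕ)) : Prop :=
  ∀ (E : Finset ℕ) (f : ℕ → ℕ), StrictMonoOn f ↑E → (∀ n ∈ E, n ≤ f n) →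
    E ∈ G → E.image f ∈ G

/-- Regular: compact (in the Cantor topology), hereditary and spreading. -/
def IsRegularFam (G : Set (Finset ℕ)) : Prop :=
  IsCompact (toCantor '' G) ∧ Hereditary G ∧ Spreading G

/-- The Cantor–Bendixson derivative. -/
def cbDeriv {α : Type*} [TopologicalSpace α] (K : Set α) : Set α :=
  {x | x ∈ K ∧ x ∈ closure (K \ {x})}

/-- Transfinite Cantor–Bendixson iterates. -/
noncomputable def cbIter {α : Type*} [TopologicalSpace α] (K : Set α) (ξ : Ordinal) : Set α :=
  Ordinal.limitRecOn ξ K (fun _ S => cbDeriv S)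
    (fun o _ ih => ⋂ (ζ : Ordinal) (h : ζ < o), ih ζ h)

open Set Filter Topology

theorem szIter_zero (ε : ℝ) (K : Set (WeakDual ℝ X)) : szIter ε K 0 = K :=
  limitRecOn_zero _ _ _

theorem szIter_add_one (ε : ℝ) (K : Set (WeakDual ℝ X)) (o : Ordinal) :
    szIter ε K (o + 1) = szDeriv ε (szIter ε K o) :=
  limitRecOn_add_one _ _ _ _

theorem szIter_limit (ε : ℝ) (K : Set (WeakDual ℝ X)) {o : Ordinal} (ho : Order.IsSuccLimit o) :
    szIter ε K o = ⋂ (ζ : Ordinal) (_ : ζ < o), szIter ε K ζ :=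
  limitRecOn_limit _ _ _ _ ho

section CantorBendixson

variable {α : Type*} [TopologicalSpace α]

theorem cbIter_zero (K : Set α) : cbIter K 0 = K :=
  limitRecOn_zero _ _ _

theorem cbIter_add_one (K : Set α) (o : Ordinal) : cbIter K (o + 1) = cbDeriv (cbIter K o) :=
  limitRecOn_add_one _ _ _ _

theorem cbIter_limit (K : Set α) {o : Ordinal} (ho : Order.IsSuccLimit o) :
    cbIter K o = ⋂ (ζ : Ordinal) (_ : ζ < o), cbIter K ζ :=
  limitRecOn_limit _ _ _ _ ho

theorem cbIter_subset (K : Set α) (η : Ordinal) : cbIter K η ⊆ K := by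
  induction η using Ordinal.limitRecOn with
  | zero => rw [cbIter_zero]
  | add_one o ih => rw [cbIter_add_one]; exact fun x hx => ih hx.1
  | limit o ho ih =>
    rw [cbIter_limit K ho]
    exact fun x hx => ih 0 ho.pos (mem_iInter₂.mp hx 0 ho.pos)

theorem mapsTo_cbIter_szIter {K : Set α} {B : Set (WeakDual ℝ X)} {Φ : α → WeakDual ℝ X}
    {ε : ℝ} (hmaps : MapsTo Φ K B) (hcont : ContinuousOn Φ K)
    (hsep : K.Pairwise fun x y => ε < dualNorm (Φ x - Φ y)) (η : Ordinal) :
    MapsTo Φ (cbIter K η) (szIter ε B η) := by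
  induction η using Ordinal.limitRecOn with
  | zero => rwa [cbIter_zero, szIter_zero]
  | add_one o ih =>
    rw [cbIter_add_one, szIter_add_one]
    rintro x ⟨hx, hx_acc⟩
    refine ⟨ih hx, fun v hv => ?_⟩
    have hxK := cbIter_subset K o hx
    have hv' : Φ ⁻¹' v ∈ 𝓝[cbIter K o \ {x}] x :=
      (hcont x hxK).mono (sdiff_subset.trans (cbIter_subset K o)) hv
    obtain ⟨y, hyv, hy, hyx⟩ := (mem_closure_iff_nhdsWithin_neBot.mp hx_acc).nonempty_of_mem
      (inter_mem hv' self_mem_nhdsWithin)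
    exact ⟨Φ x, ⟨mem_of_mem_nhds hv, ih hx⟩, Φ y, ⟨hyv, ih hy⟩,
      hsep hxK (cbIter_subset K o hy) (Ne.symm hyx)⟩
  | limit o ho ih =>
    rw [cbIter_limit K ho, szIter_limit ε B ho]
    intro x hx
    simp only [mem_iInter] at hx ⊢
    exact fun ζ hζ => ih ζ hζ (hx ζ hζ)

end CantorBendixson

namespace WeakDual

theorem sum_apply {ι : Type*} (s : Finset ι) (g : ι → WeakDual ℝ X) (x : X) :
    (∑ i ∈ s, g i) x = ∑ i ∈ s, g i x :=
  map_sum ((topDualPairing ℝ X).flip x) g s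

theorem abs_apply_le_dualNorm_mul (g : WeakDual ℝ X) (x : X) : |g x| ≤ dualNorm g * ‖x‖ :=
  (toStrongDual g).le_opNorm x

theorem tendsto_apply_of_mem_span {ι : Type*} {l : Filter ι} {g : ι → WeakDual ℝ X}
    {g₀ : WeakDual ℝ X} {D : Set X} (hD : ∀ y ∈ D, Tendsto (fun i => g i y) l (𝓝 (g₀ y)))
    {y : X} (hy : y ∈ Submodule.span ℝ D) : Tendsto (fun i => g i y) l (𝓝 (g₀ y)) := by
  induction hy using Submodule.span_induction with
  | mem y hy => exact hD y hy
  | zero => simpa using tendsto_const_nhds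
  | add y z _ _ hy hz => simpa using hy.add hz
  | smul c y _ hy => simpa using hy.const_mul c

theorem tendsto_of_dualNorm_le_of_dense {ι : Type*} {l : Filter ι} {g : ι → WeakDual ℝ X}
    {g₀ : WeakDual ℝ X} {C : ℝ} {D : Set X} (hD : Dense D)
    (hbound : ∀ᶠ i in l, dualNorm (g i) ≤ C)
    (hconv : ∀ y ∈ D, Tendsto (fun i => g i y) l (𝓝 (g₀ y))) : Tendsto g l (𝓝 g₀) := by
  refine tendsto_iff_forall_eval_tendsto_topDualPairing.mpr fun x => ?_
  rw [Metric.tendsto_nhds]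
  intro δ hδ
  set M := |C| + dualNorm g₀ + 1
  have hM : 0 < M := by have : 0 ≤ dualNorm g₀ := norm_nonneg _; positivity
  obtain ⟨y, hy, hxy⟩ := Metric.mem_closure_iff.mp (hD.closure_eq ▸ mem_univ x)
    (δ / (2 * M)) (by positivity)
  have hxy' : M * ‖x - y‖ < δ / 2 := by
    rw [← dist_eq_norm]
    rw [lt_div_iff₀ (by positivity)] at hxy
    linarith
  filter_upwards [hbound, Metric.tendsto_nhds.mp (hconv y hy) (δ / 2) (by positivity)]
    with i hi hiy
  rw [Real.dist_eq] at hiy ⊢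
  have hsplit : g i x - g₀ x = g i (x - y) + (g i y - g₀ y) + g₀ (y - x) := by
    simp only [map_sub]; ring
  have hgi := abs_apply_le_dualNorm_mul (g i) (x - y)
  have hg₀ := abs_apply_le_dualNorm_mul g₀ (y - x)
  rw [norm_sub_rev] at hg₀
  change |g i x - g₀ x| < δ
  calc |g i x - g₀ x| ≤ |g i (x - y)| + |g i y - g₀ y| + |g₀ (y - x)| := by
        rw [hsplit]; exact abs_add_three _ _ _
    _ ≤ M * ‖x - y‖ + |g i y - g₀ y| := by
        nlinarith [le_abs_self C, norm_nonneg (x - y)]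
    _ < δ := by linarith

end WeakDual

section SchreierSpace

variable {G : Set (Finset ℕ)} {e : ℕ → X} {f : ℕ → WeakDual ℝ X}

theorem coord_apply_finsuppSum (hbi : ∀ i j, f i (e j) = if i = j then 1 else 0)
    (a : ℕ →₀ ℝ) (i : ℕ) : f i (a.sum fun j c => c • e j) = a i := by
  simp [map_finsuppSum, hbi, eq_comm]

theorem sum_coord_apply_finsuppSum (hbi : ∀ i j, f i (e j) = if i = j then 1 else 0)
    (E : Finset ℕ) (a : ℕ →₀ ℝ) : (∑ i ∈ E, f i) (a.sum fun j c => c • e j) = ∑ i ∈ E, a i := by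
  simp only [WeakDual.sum_apply, coord_apply_finsuppSum hbi]

theorem sum_coord_apply_basis (hbi : ∀ i j, f i (e j) = if i = j then 1 else 0)
    (E : Finset ℕ) (i : ℕ) : (∑ j ∈ E, f j) (e i) = if i ∈ E then 1 else 0 := by
  simp [WeakDual.sum_apply, hbi, eq_comm]

theorem sum_abs_le_norm_finsuppSum
    (hnorm : ∀ a : ℕ →₀ ℝ, ‖a.sum fun i c => c • e i‖ = sSup {r | ∃ F ∈ G, r = ∑ i ∈ F, |a i|})
    {F : Finset ℕ} (hF : F ∈ G) (a : ℕ →₀ ℝ) : ∑ i ∈ F, |a i| ≤ ‖a.sum fun i c => c • e i‖ := by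
  rw [hnorm a]
  refine le_csSup ⟨∑ i ∈ a.support, |a i|, ?_⟩ ⟨F, hF, rfl⟩
  rintro _ ⟨F', -, rfl⟩
  calc ∑ i ∈ F', |a i| = ∑ i ∈ F' with a i ≠ 0, |a i| :=
        (Finset.sum_filter_of_ne fun i _ h => by simpa using h).symm
    _ ≤ ∑ i ∈ a.support, |a i| :=
        Finset.sum_le_sum_of_subset_of_nonneg (fun i hi => by simp_all) fun _ _ _ => abs_nonneg _

theorem norm_basis_le_one
    (hnorm : ∀ a : ℕ →₀ ℝ, ‖a.sum fun i c => c • e i‖ = sSup {r | ∃ F ∈ G, r = ∑ i ∈ F, |a i|})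
    (i : ℕ) : ‖e i‖ ≤ 1 := by
  have h := hnorm (Finsupp.single i 1)
  rw [Finsupp.sum_single_index (by rw [zero_smul]), one_smul] at h
  rw [h]
  refine Real.sSup_le ?_ zero_le_one
  rintro _ ⟨F, -, rfl⟩
  simp only [Finsupp.single_apply, apply_ite, abs_one, abs_zero, Finset.sum_ite_eq]
  split_ifs <;> norm_num

theorem dualNorm_sum_le_one (hbi : ∀ i j, f i (e j) = if i = j then 1 else 0)
    (hdense : Dense (Submodule.span ℝ (Set.range e) : Set X))
    (hnorm : ∀ a : ℕ →₀ ℝ, ‖a.sum fun i c => c • e i‖ = sSup {r | ∃ F ∈ G, r = ∑ i ∈ F, |a i|})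
    {E : Finset ℕ} (hE : E ∈ G) : dualNorm (∑ i ∈ E, f i) ≤ 1 := by
  refine ContinuousLinearMap.opNorm_le_bound _ zero_le_one fun x => ?_
  rw [one_mul]
  refine hdense.induction (P := fun x => |(∑ i ∈ E, f i) x| ≤ ‖x‖) (fun x hx => ?_)
    (isClosed_le (by fun_prop) continuous_norm) x
  obtain ⟨a, rfl⟩ := Finsupp.mem_span_range_iff_exists_finsupp.mp hx
  rw [sum_coord_apply_finsuppSum hbi]
  exact (Finset.abs_sum_le_sum_abs _ _).trans (sum_abs_le_norm_finsuppSum hnorm hE a)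

theorem one_le_dualNorm_sum_sub_sum (hbi : ∀ i j, f i (e j) = if i = j then 1 else 0)
    (hnorm : ∀ a : ℕ →₀ ℝ, ‖a.sum fun i c => c • e i‖ = sSup {r | ∃ F ∈ G, r = ∑ i ∈ F, |a i|})
    {F F' : Finset ℕ} (hne : F ≠ F') : 1 ≤ dualNorm (∑ i ∈ F, f i - ∑ i ∈ F', f i) := by
  obtain ⟨i, hi⟩ := Finset.symmDiff_nonempty.mpr hne
  have hval : |(∑ j ∈ F, f j - ∑ j ∈ F', f j) (e i)| = 1 := by
    change |(∑ j ∈ F, f j) (e i) - (∑ j ∈ F', f j) (e i)| = 1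
    rcases Finset.mem_symmDiff.mp hi with ⟨h, h'⟩ | ⟨h, h'⟩ <;>
      simp [sum_coord_apply_basis hbi, h, h']
  calc 1 = |(∑ j ∈ F, f j - ∑ j ∈ F', f j) (e i)| := hval.symm
    _ ≤ dualNorm (∑ j ∈ F, f j - ∑ j ∈ F', f j) * ‖e i‖ := WeakDual.abs_apply_le_dualNorm_mul _ _
    _ ≤ dualNorm (∑ j ∈ F, f j - ∑ j ∈ F', f j) :=
        mul_le_of_le_one_right (norm_nonneg _) (norm_basis_le_one hnorm i)

theorem toCantor_injective : Function.Injective toCantor :=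
  fun F F' h => Finset.ext fun n => by simpa [toCantor] using congrFun h n

/-- `toCantor F ↦ Σ_{i∈F} eᵢ*`, extended arbitrarily off the range of `toCantor`. -/
noncomputable def cantorSum (f : ℕ → WeakDual ℝ X) (σ : ℕ → Bool) : WeakDual ℝ X :=
  ∑ i ∈ Function.invFun toCantor σ, f i

theorem cantorSum_toCantor (f : ℕ → WeakDual ℝ X) (F : Finset ℕ) :
    cantorSum f (toCantor F) = ∑ i ∈ F, f i := by
  rw [cantorSum, Function.leftInverse_invFun toCantor_injective F]

theorem continuousOn_cantorSum (hbi : ∀ i j, f i (e j) = if i = j then 1 else 0)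
    (hdense : Dense (Submodule.span ℝ (Set.range e) : Set X))
    (hnorm : ∀ a : ℕ →₀ ℝ, ‖a.sum fun i c => c • e i‖ = sSup {r | ∃ F ∈ G, r = ∑ i ∈ F, |a i|}) :
    ContinuousOn (cantorSum f) (toCantor '' G) := by
  rintro _ ⟨F, -, rfl⟩
  refine WeakDual.tendsto_of_dualNorm_le_of_dense (C := 1) hdense ?_
    fun y hy => WeakDual.tendsto_apply_of_mem_span ?_ hy
  · filter_upwards [self_mem_nhdsWithin] with σ hσ
    obtain ⟨F', hF', rfl⟩ := hσ
    rw [cantorSum_toCantor]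
    exact dualNorm_sum_le_one hbi hdense hnorm hF'
  · rintro _ ⟨i, rfl⟩
    have hval (F' : Finset ℕ) :
        cantorSum f (toCantor F') (e i) = if toCantor F' i then 1 else 0 := by
      simp [cantorSum_toCantor, sum_coord_apply_basis hbi, toCantor]
    have hcoord : Continuous fun σ : ℕ → Bool => if σ i then (1 : ℝ) else 0 :=
      (continuous_of_discreteTopology (f := fun b : Bool => if b then (1 : ℝ) else 0)).comp
        (continuous_apply i)
    rw [hval]
    refine Tendsto.congr' ?_ (hcoord.continuousAt.mono_left nhdsWithin_le_nhds)
    filter_upwards [self_mem_nhdsWithin] with σ hσ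
    obtain ⟨F', -, rfl⟩ := hσ
    exact (hval F').symm

theorem mapsTo_cbIter_szIter_cantorSum (hbi : ∀ i j, f i (e j) = if i = j then 1 else 0)
    (hdense : Dense (Submodule.span ℝ (Set.range e) : Set X))
    (hnorm : ∀ a : ℕ →₀ ℝ, ‖a.sum fun i c => c • e i‖ = sSup {r | ∃ F ∈ G, r = ∑ i ∈ F, |a i|})
    {ε : ℝ} (hε : ε < 1) (η : Ordinal) :
    MapsTo (cantorSum f) (cbIter (toCantor '' G) η) (szIter ε {g | dualNorm g ≤ 1} η) := by
  refine mapsTo_cbIter_szIter ?_ (continuousOn_cantorSum hbi hdense hnorm) ?_ η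
  · rintro _ ⟨F, hF, rfl⟩
    rw [cantorSum_toCantor]
    exact dualNorm_sum_le_one hbi hdense hnorm hF
  · rintro _ ⟨F, -, rfl⟩ _ ⟨F', -, rfl⟩ hne
    rw [cantorSum_toCantor, cantorSum_toCantor]
    exact hε.trans_le (one_le_dualNorm_sum_sub_sum hbi hnorm (ne_of_apply_ne toCantor hne))

end SchreierSpace

theorem schreier_space_szlenk_general {X : Type*} [NormedAddCommGroup X] [NormedSpace ℝ X]
    (G : Set (Finset ℕ))
    (e : ℕ → X) (f : ℕ → WeakDual ℝ X)
    (hbi : ∀ i j, f i (e j) = if i = j then 1 else 0)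
    (hdense : Dense (Submodule.span ℝ (Set.range e) : Set X))
    (hnorm : ∀ a : ℕ →₀ ℝ,
      ‖a.sum fun i c => c • e i‖ = sSup {r | ∃ F ∈ G, r = ∑ i ∈ F, |a i|}) :
    (∀ ε : ℝ, 0 < ε → ε < 1 → ∀ (η : Ordinal) (F : Finset ℕ),
      toCantor F ∈ cbIter (toCantor '' G) η →
      (∑ i ∈ F, f i) ∈ szIter ε {g : WeakDual ℝ X | dualNorm g ≤ 1} η) ∧
    (∀ ξ : Ordinal,
      (∀ ε : ℝ, 0 < ε → szIter ε {g : WeakDual ℝ X | dualNorm g ≤ 1} ξ = ∅) →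
      cbIter (toCantor '' G) ξ = ∅) := by
  refine ⟨fun ε _ hε η F hF => ?_, fun ξ hξ => ?_⟩
  · simpa only [cantorSum_toCantor] using mapsTo_cbIter_szIter_cantorSum hbi hdense hnorm hε η hF
  · have h := mapsTo_cbIter_szIter_cantorSum (f := f) hbi hdense hnorm (ε := 1 / 2)
      (by norm_num) ξ
    rwa [hξ (1 / 2) (by norm_num), mapsTo_empty_iff] at h

/-- Let `𝒢` be a regular family containing all singletons and let `X` be (a realization
of) the Schreier space `X_𝒢`, with basis `e` and coordinate functionals `f`.  Then for
any `0 < ε < 1`, every ordinal `η` and every `F ∈ 𝒢^η`, the functional `Σ_{i∈F} eᵢ*`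
lies in `s_ε^η(B_{X_𝒢^*})`; consequently `Sz(X_𝒢) ≥ CB(𝒢)`. -/
theorem schreier_space_szlenk {X : Type*} [NormedAddCommGroup X] [NormedSpace ℝ X]
    [CompleteSpace X] (G : Set (Finset ℕ)) (hG : IsRegularFam G)
    (hsing : ∀ i : ℕ, ({i} : Finset ℕ) ∈ G)
    (e : ℕ → X) (f : ℕ → WeakDual ℝ X)
    (hbi : ∀ i j, f i (e j) = if i = j then 1 else 0)
    (hdense : Dense (Submodule.span ℝ (Set.range e) : Set X))
    (hnorm : ∀ a : ℕ →₀ ℝ,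
      ‖a.sum fun i c => c • e i‖ = sSup {r | ∃ F ∈ G, r = ∑ i ∈ F, |a i|}) :
    (∀ ε : ℝ, 0 < ε → ε < 1 → ∀ (η : Ordinal) (F : Finset ℕ),
      toCantor F ∈ cbIter (toCantor '' G) η →
      (∑ i ∈ F, f i) ∈ szIter ε {g : WeakDual ℝ X | dualNorm g ≤ 1} η) ∧
    (∀ ξ : Ordinal,
      (∀ ε : ℝ, 0 < ε → szIter ε {g : WeakDual ℝ X | dualNorm g ≤ 1} ξ = ∅) →
      cbIter (toCantor '' G) ξ = ∅) :=
  schreier_space_szlenk_general G e f hbi hdense hnorm
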